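/- Let Q' denote the connected component (in the bipartite graph with edges where p(x,y)>0) containing X (equivalently Y). If Q is any random variable with I(Q;Y|X)=I(Q;X|Y)=0, then I(X,Y;Q) = I(Q';Q) ≤ H(Q'). -/
import Mathlib


open Finset

open Classical in
/-- Probability that random variable `X` (on finite weighted space `p`) equals `a`. -/
noncomputable def prob {Ω α : Type*} [Fintype Ω] (p : Ω → ℝ) (X : Ω → α) (a : α) : ℝ :=
  ∑ ω, if X ω = a then p ω else 0

/-- Shannon entropy of a random variable. -/
noncomputable def ent {Ω α : Type*} [Fintype Ω] [Fintype α] (p : Ω → ℝ) (X : Ω → α) : ℝ :=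
  ∑ a, Real.negMulLog (prob p X a)

/-- Conditional entropy H(X|Y). -/
noncomputable def condEnt {Ω α β : Type*} [Fintype Ω] [Fintype α] [Fintype β]
    (p : Ω → ℝ) (X : Ω → α) (Y : Ω → β) : ℝ :=
  ent p (fun ω => (X ω, Y ω)) - ent p Y

/-- Mutual information I(X;Y). -/
noncomputable def mi {Ω α β : Type*} [Fintype Ω] [Fintype α] [Fintype β]
    (p : Ω → ℝ) (X : Ω → α) (Y : Ω → β) : ℝ :=
  ent p X + ent p Y - ent p (fun ω => (X ω, Y ω))

/-- Conditional mutual information I(X;Y|Z). -/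
noncomputable def cmi {Ω α β γ : Type*} [Fintype Ω] [Fintype α] [Fintype β] [Fintype γ]
    (p : Ω → ℝ) (X : Ω → α) (Y : Ω → β) (Z : Ω → γ) : ℝ :=
  ent p (fun ω => (X ω, Z ω)) + ent p (fun ω => (Y ω, Z ω))
    - ent p (fun ω => ((X ω, Y ω), Z ω)) - ent p Z

/-- `p` is a probability mass function. -/
def IsPMF {Ω : Type*} [Fintype Ω] (p : Ω → ℝ) : Prop :=
  (∀ ω, 0 ≤ p ω) ∧ ∑ ω, p ω = 1

/-- Bipartite graph on 𝒳 ⊔ 𝒴 with an edge between x and y iff the joint pmf μ(x,y) > 0. -/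
def edge {α β : Type*} (μ : α × β → ℝ) : α ⊕ β → α ⊕ β → Prop
  | Sum.inl x, Sum.inr y => 0 < μ (x, y)
  | Sum.inr y, Sum.inl x => 0 < μ (x, y)
  | _, _ => False

open Classical

lemma prob_nonneg {Ω α : Type*} [Fintype Ω] {p : Ω → ℝ} (hp : ∀ ω, 0 ≤ p ω)
    (X : Ω → α) (a : α) : 0 ≤ prob p X a := by
  refine Finset.sum_nonneg fun ω _ => ?_
  split_ifs
  · exact hp ω
  · exact le_rfl

lemma prob_comp {Ω T α : Type*} [Fintype Ω] [Fintype T] (p : Ω → ℝ) (W : Ω → T)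
    (g : T → α) (a : α) :
    prob (prob p W) g a = prob p (fun ω => g (W ω)) a := by
  unfold prob
  calc ∑ t, (if g t = a then (∑ ω, if W ω = t then p ω else 0) else 0)
      = ∑ t, ∑ ω, (if g t = a then (if W ω = t then p ω else 0) else 0) := by
        refine Finset.sum_congr rfl fun t _ => ?_
        split_ifs <;> simp
    _ = ∑ ω, ∑ t, (if g t = a then (if W ω = t then p ω else 0) else 0) := Finset.sum_comm
    _ = ∑ ω, (if g (W ω) = a then p ω else 0) := by
        refine Finset.sum_congr rfl fun ω _ => ?_
        rw [Finset.sum_eq_single (W ω)]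
        · simp
        · intro t _ ht
          have h0 : (if W ω = t then p ω else 0) = 0 := if_neg (fun h => ht h.symm)
          rw [h0, ite_self]
        · simp

lemma ent_comp {Ω T α : Type*} [Fintype Ω] [Fintype T] [Fintype α] (p : Ω → ℝ) (W : Ω → T)
    (g : T → α) : ent (prob p W) g = ent p (fun ω => g (W ω)) := by
  unfold ent
  exact Finset.sum_congr rfl fun a _ => by rw [prob_comp]

lemma prob_eq_sum_filter {Ω α : Type*} [Fintype Ω] (p : Ω → ℝ) (X : Ω → α) (a : α) :
    prob p X a = ∑ ω ∈ univ.filter (fun ω => X ω = a), p ω :=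
  (Finset.sum_filter _ _).symm

lemma negMulLog_sum_le {ι : Type*} (s : Finset ι) (g : ι → ℝ) (hg : ∀ i ∈ s, 0 ≤ g i) :
    Real.negMulLog (∑ i ∈ s, g i) ≤ ∑ i ∈ s, Real.negMulLog (g i) := by
  have hS : ∀ i ∈ s, g i ≤ ∑ j ∈ s, g j := fun i hi =>
    Finset.single_le_sum (fun j hj => hg j hj) hi
  have e1 : Real.negMulLog (∑ i ∈ s, g i)
      = ∑ i ∈ s, (-(g i) * Real.log (∑ j ∈ s, g j)) := by
    rw [Real.negMulLog, neg_mul, ← neg_mul]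
    rw [show -(∑ i ∈ s, g i) = ∑ i ∈ s, -(g i) by simp, Finset.sum_mul]
  rw [e1]
  refine Finset.sum_le_sum fun i hi => ?_
  rcases (hg i hi).eq_or_lt with h | h
  · simp [← h, Real.negMulLog]
  · rw [Real.negMulLog, neg_mul, ← neg_mul]
    exact mul_le_mul_of_nonpos_left (Real.log_le_log h (hS i hi)) (by linarith)

lemma point_ge {w u : ℝ} (hw : 0 ≤ w) (hu : 0 ≤ u) (habs : u = 0 → w = 0) :
    w - u ≤ w * (Real.log w - Real.log u) := by
  rcases hw.eq_or_lt with h | h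
  · simp [← h]; linarith
  · have hu' : 0 < u := by
      rcases hu.eq_or_lt with h' | h'
      · exact absurd (habs h'.symm) (by linarith)
      · exact h'
    have hl : Real.log (u / w) ≤ u / w - 1 := Real.log_le_sub_one_of_pos (div_pos hu' h)
    rw [Real.log_div hu'.ne' h.ne'] at hl
    have h2 : w * (Real.log u - Real.log w) ≤ w * (u / w - 1) :=
      mul_le_mul_of_nonneg_left hl h.le
    have h3 : w * (u / w - 1) = u - w := by field_simp
    nlinarith

lemma point_eq {w u : ℝ} (hw : 0 ≤ w) (hu : 0 ≤ u) (habs : u = 0 → w = 0)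
    (h : w * (Real.log w - Real.log u) = w - u) : w = u := by
  rcases hw.eq_or_lt with h0 | h0
  · rw [← h0] at h ⊢; simp at h; linarith
  · have hu' : 0 < u := by
      rcases hu.eq_or_lt with h' | h'
      · exact absurd (habs h'.symm) (by linarith)
      · exact h'
    by_contra hne
    have hne' : u / w ≠ 1 := by
      intro hq; exact hne ((div_eq_one_iff_eq h0.ne').mp hq).symm
    have hl : Real.log (u / w) < u / w - 1 :=
      Real.log_lt_sub_one_of_pos (div_pos hu' h0) hne'
    rw [Real.log_div hu'.ne' h0.ne'] at hl
    have h2 : w * (Real.log u - Real.log w) < w * (u / w - 1) :=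
      (mul_lt_mul_iff_right₀ h0).mpr hl
    have h3 : w * (u / w - 1) = u - w := by field_simp
    nlinarith

lemma gibbs_sum {ι : Type*} [Fintype ι] (w u : ι → ℝ) (hw : ∀ i, 0 ≤ w i)
    (hu : ∀ i, 0 ≤ u i) (habs : ∀ i, u i = 0 → w i = 0)
    (hsum : ∑ i, u i ≤ ∑ i, w i) :
    0 ≤ ∑ i, w i * (Real.log (w i) - Real.log (u i)) := by
  have : ∑ i, (w i - u i) ≤ ∑ i, w i * (Real.log (w i) - Real.log (u i)) :=
    Finset.sum_le_sum fun i _ => point_ge (hw i) (hu i) (habs i)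
  rw [Finset.sum_sub_distrib] at this
  linarith

lemma gibbs_eq {ι : Type*} [Fintype ι] (w u : ι → ℝ) (hw : ∀ i, 0 ≤ w i)
    (hu : ∀ i, 0 ≤ u i) (habs : ∀ i, u i = 0 → w i = 0)
    (hsum : ∑ i, u i = ∑ i, w i)
    (h0 : ∑ i, w i * (Real.log (w i) - Real.log (u i)) = 0) :
    ∀ i, w i = u i := by
  have hF : ∀ i ∈ Finset.univ, 0 ≤ w i * (Real.log (w i) - Real.log (u i)) - (w i - u i) :=
    fun i _ => by linarith [point_ge (hw i) (hu i) (habs i)]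
  have hFs : ∑ i, (w i * (Real.log (w i) - Real.log (u i)) - (w i - u i)) = 0 := by
    rw [Finset.sum_sub_distrib, Finset.sum_sub_distrib, h0, hsum]; ring
  have := (Finset.sum_eq_zero_iff_of_nonneg hF).mp hFs
  intro i
  have hi := this i (Finset.mem_univ i)
  exact point_eq (hw i) (hu i) (habs i) (by linarith)

lemma prob_marg2 {Ω α β : Type*} [Fintype Ω] [Fintype β] (p : Ω → ℝ) (U : Ω → α) (V : Ω → β)
    (a : α) : prob p U a = ∑ b, prob p (fun ω => (U ω, V ω)) (a, b) := by
  unfold prob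
  rw [Finset.sum_comm]
  refine Finset.sum_congr rfl fun ω _ => ?_
  rcases eq_or_ne (U ω) a with h | h
  · rw [Finset.sum_eq_single (V ω)]
    · simp [h]
    · intro b _ hb
      exact if_neg (by simp [Prod.ext_iff]; tauto)
    · simp
  · rw [if_neg h]
    refine (Finset.sum_eq_zero fun b _ => if_neg ?_).symm
    simp [Prod.ext_iff]
    tauto

lemma prob_relabel {Ω α β : Type*} [Fintype Ω] (p : Ω → ℝ) (U : Ω → α) {g : α → β}
    (hg : Function.Injective g) (a : α) :
    prob p (fun ω => g (U ω)) (g a) = prob p U a := by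
  unfold prob
  exact Finset.sum_congr rfl fun ω _ => by
    rcases eq_or_ne (U ω) a with h | h
    · simp [h]
    · rw [if_neg (fun hh => h (hg hh)), if_neg h]

lemma ent_relabel {Ω α β : Type*} [Fintype Ω] [Fintype α] [Fintype β] (p : Ω → ℝ)
    (U : Ω → α) {g : α → β} (hg : Function.Injective g) :
    ent p (fun ω => g (U ω)) = ent p U := by
  unfold ent
  have hzero : ∀ b ∈ (univ : Finset β), b ∉ univ.image g →
      Real.negMulLog (prob p (fun ω => g (U ω)) b) = 0 := by
    intro b _ hb
    have h0 : prob p (fun ω => g (U ω)) b = 0 := by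
      apply Finset.sum_eq_zero
      intro ω _
      refine if_neg fun h => hb ?_
      exact Finset.mem_image.mpr ⟨U ω, Finset.mem_univ _, h⟩
    rw [h0, Real.negMulLog_zero]
  calc ∑ b : β, Real.negMulLog (prob p (fun ω => g (U ω)) b)
      = ∑ b ∈ univ.image g, Real.negMulLog (prob p (fun ω => g (U ω)) b) :=
        (Finset.sum_subset (Finset.subset_univ _) hzero).symm
    _ = ∑ a : α, Real.negMulLog (prob p (fun ω => g (U ω)) (g a)) :=
        Finset.sum_image (fun a _ b _ h => hg h)
    _ = ∑ a : α, Real.negMulLog (prob p U a) :=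
        Finset.sum_congr rfl fun a _ => by rw [prob_relabel p U hg]

lemma sum_rot {I J K : Type*} [Fintype I] [Fintype J] [Fintype K] (F : I → J → K → ℝ) :
    ∑ k, ∑ i, ∑ j, F i j k = ∑ i, ∑ j, ∑ k, F i j k := by
  rw [Finset.sum_comm]
  exact Finset.sum_congr rfl fun i _ => Finset.sum_comm

lemma cmi_zero_indep {T I J K : Type*} [Fintype T] [Fintype I] [Fintype J] [Fintype K]
    (m : T → ℝ) (hm : ∀ t, 0 ≤ m t) (Qf : T → I) (Yf : T → J) (Xf : T → K)
    (h : cmi m Qf Yf Xf = 0) :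
    ∀ i j k, prob m (fun t => (Qf t, Yf t, Xf t)) (i, j, k) * prob m Xf k
           = prob m (fun t => (Qf t, Xf t)) (i, k) * prob m (fun t => (Yf t, Xf t)) (j, k) := by
  set A : I → J → K → ℝ := fun i j k => prob m (fun t => (Qf t, Yf t, Xf t)) (i, j, k) with hA
  set B : I → K → ℝ := fun i k => ∑ j, A i j k with hBdef
  set D : J → K → ℝ := fun j k => ∑ i, A i j k with hDdef
  set C : K → ℝ := fun k => ∑ i, ∑ j, A i j k with hCdef
  have hA0 : ∀ i j k, 0 ≤ A i j k := fun i j k => prob_nonneg hm _ _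
  have hB0 : ∀ i k, 0 ≤ B i k := fun i k => Finset.sum_nonneg fun j _ => hA0 i j k
  have hD0 : ∀ j k, 0 ≤ D j k := fun j k => Finset.sum_nonneg fun i _ => hA0 i j k
  have hC0 : ∀ k, 0 ≤ C k := fun k => Finset.sum_nonneg fun i _ => hB0 i k
  have hAB : ∀ i j k, A i j k ≤ B i k := fun i j k =>
    Finset.single_le_sum (fun j' _ => hA0 i j' k) (Finset.mem_univ j)
  have hAD : ∀ i j k, A i j k ≤ D j k := fun i j k =>
    Finset.single_le_sum (fun i' _ => hA0 i' j k) (Finset.mem_univ i)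
  have hBC : ∀ i k, B i k ≤ C k := fun i k =>
    Finset.single_le_sum (f := fun i => B i k) (fun i' _ => hB0 i' k) (Finset.mem_univ i)
  have hDC : ∀ j k, D j k ≤ C k := fun j k => by
    have : C k = ∑ j, D j k := Finset.sum_comm
    rw [this]
    exact Finset.single_le_sum (f := fun j => D j k) (fun j' _ => hD0 j' k) (Finset.mem_univ j)
  -- marginal identifications
  have hBp : ∀ i k, prob m (fun t => (Qf t, Xf t)) (i, k) = B i k := by
    intro i k
    rw [prob_marg2 m (fun t => (Qf t, Xf t)) Yf (i, k)]
    refine Finset.sum_congr rfl fun j _ => ?_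
    have hg : Function.Injective (fun v : I × J × K => ((v.1, v.2.2), v.2.1)) := by
      intro a b hab
      simp only [Prod.ext_iff] at hab ⊢
      tauto
    exact prob_relabel m (fun t => (Qf t, Yf t, Xf t)) hg (i, j, k)
  have hDp : ∀ j k, prob m (fun t => (Yf t, Xf t)) (j, k) = D j k := by
    intro j k
    rw [prob_marg2 m (fun t => (Yf t, Xf t)) Qf (j, k)]
    refine Finset.sum_congr rfl fun i _ => ?_
    have hg : Function.Injective (fun v : I × J × K => ((v.2.1, v.2.2), v.1)) := by
      intro a b hab
      simp only [Prod.ext_iff] at hab ⊢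
      tauto
    exact prob_relabel m (fun t => (Qf t, Yf t, Xf t)) hg (i, j, k)
  have hCp : ∀ k, prob m Xf k = C k := by
    intro k
    rw [prob_marg2 m Xf (fun t => (Qf t, Yf t)) k]
    rw [Fintype.sum_prod_type]
    refine Finset.sum_congr rfl fun i _ => Finset.sum_congr rfl fun j _ => ?_
    have hg : Function.Injective (fun v : I × J × K => (v.2.2, (v.1, v.2.1))) := by
      intro a b hab
      simp only [Prod.ext_iff] at hab ⊢
      tauto
    exact prob_relabel m (fun t => (Qf t, Yf t, Xf t)) hg (i, j, k)
  -- ent identifications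
  have entQX : ent m (fun t => (Qf t, Xf t)) = ∑ i, ∑ k, Real.negMulLog (B i k) := by
    rw [ent, Fintype.sum_prod_type]
    exact Finset.sum_congr rfl fun i _ => Finset.sum_congr rfl fun k _ => by rw [hBp]
  have entYX : ent m (fun t => (Yf t, Xf t)) = ∑ j, ∑ k, Real.negMulLog (D j k) := by
    rw [ent, Fintype.sum_prod_type]
    exact Finset.sum_congr rfl fun j _ => Finset.sum_congr rfl fun k _ => by rw [hDp]
  have entX : ent m Xf = ∑ k, Real.negMulLog (C k) := by
    rw [ent]
    exact Finset.sum_congr rfl fun k _ => by rw [hCp]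
  have entQYX : ent m (fun t => ((Qf t, Yf t), Xf t))
      = ∑ i, ∑ j, ∑ k, Real.negMulLog (A i j k) := by
    have hg : Function.Injective (fun v : I × J × K => ((v.1, v.2.1), v.2.2)) := by
      intro a b hab
      simp only [Prod.ext_iff] at hab ⊢
      tauto
    have e := ent_relabel m (fun t => (Qf t, Yf t, Xf t)) hg
    rw [show ent m (fun t => ((Qf t, Yf t), Xf t))
        = ent m (fun t => (Qf t, Yf t, Xf t)) from e]
    rw [ent, Fintype.sum_prod_type]
    exact Finset.sum_congr rfl fun i _ => by rw [Fintype.sum_prod_type]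
  have hcmi : (∑ i, ∑ k, Real.negMulLog (B i k)) + (∑ j, ∑ k, Real.negMulLog (D j k))
      - (∑ i, ∑ j, ∑ k, Real.negMulLog (A i j k)) - (∑ k, Real.negMulLog (C k)) = 0 := by
    rw [← entQX, ← entYX, ← entQYX, ← entX]
    exact h
  set S : K → ℝ := fun k => ∑ i, ∑ j,
      A i j k * (Real.log (A i j k) - Real.log (B i k * D j k / C k)) with hSdef
  have hterm : ∀ i j k, A i j k * (Real.log (A i j k) - Real.log (B i k * D j k / C k))
      = A i j k * Real.log (A i j k) + A i j k * Real.log (C k)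
        - A i j k * Real.log (B i k) - A i j k * Real.log (D j k) := by
    intro i j k
    rcases (hA0 i j k).eq_or_lt with h0 | h0
    · simp [← h0]
    · have hB' : 0 < B i k := lt_of_lt_of_le h0 (hAB i j k)
      have hD' : 0 < D j k := lt_of_lt_of_le h0 (hAD i j k)
      have hC' : 0 < C k := lt_of_lt_of_le hB' (hBC i k)
      rw [Real.log_div (mul_ne_zero hB'.ne' hD'.ne') hC'.ne',
        Real.log_mul hB'.ne' hD'.ne']
      ring
  have q1 : ∑ k, ∑ i, ∑ j, A i j k * Real.log (A i j k)
      = -(∑ i, ∑ j, ∑ k, Real.negMulLog (A i j k)) := by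
    rw [sum_rot (fun i j k => A i j k * Real.log (A i j k))]
    rw [← Finset.sum_neg_distrib]
    refine Finset.sum_congr rfl fun i _ => ?_
    rw [← Finset.sum_neg_distrib]
    refine Finset.sum_congr rfl fun j _ => ?_
    rw [← Finset.sum_neg_distrib]
    refine Finset.sum_congr rfl fun k _ => ?_
    rw [Real.negMulLog]; ring
  have q2 : ∑ k, ∑ i, ∑ j, A i j k * Real.log (C k)
      = -(∑ k, Real.negMulLog (C k)) := by
    rw [← Finset.sum_neg_distrib]
    refine Finset.sum_congr rfl fun k _ => ?_
    calc ∑ i, ∑ j, A i j k * Real.log (C k)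
        = ∑ i, (∑ j, A i j k) * Real.log (C k) :=
          Finset.sum_congr rfl fun i _ => (Finset.sum_mul _ _ _).symm
      _ = (∑ i, ∑ j, A i j k) * Real.log (C k) := (Finset.sum_mul _ _ _).symm
      _ = -Real.negMulLog (C k) := by rw [Real.negMulLog, hCdef]; ring
  have q3 : ∑ k, ∑ i, ∑ j, A i j k * Real.log (B i k)
      = -(∑ i, ∑ k, Real.negMulLog (B i k)) := by
    rw [Finset.sum_comm, ← Finset.sum_neg_distrib]
    refine Finset.sum_congr rfl fun i _ => ?_
    rw [← Finset.sum_neg_distrib]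
    refine Finset.sum_congr rfl fun k _ => ?_
    rw [← Finset.sum_mul, Real.negMulLog, hBdef]; ring
  have q4 : ∑ k, ∑ i, ∑ j, A i j k * Real.log (D j k)
      = -(∑ j, ∑ k, Real.negMulLog (D j k)) := by
    have swap : ∀ k, ∑ i, ∑ j, A i j k * Real.log (D j k)
        = ∑ j, ∑ i, A i j k * Real.log (D j k) := fun k => Finset.sum_comm
    rw [Finset.sum_congr rfl (fun k _ => swap k), Finset.sum_comm, ← Finset.sum_neg_distrib]
    refine Finset.sum_congr rfl fun j _ => ?_
    rw [← Finset.sum_neg_distrib]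
    refine Finset.sum_congr rfl fun k _ => ?_
    rw [← Finset.sum_mul, Real.negMulLog, hDdef]; ring
  have hSsum : ∑ k, S k = 0 := by
    have expand : ∑ k, S k
        = (∑ k, ∑ i, ∑ j, A i j k * Real.log (A i j k))
          + (∑ k, ∑ i, ∑ j, A i j k * Real.log (C k))
          - (∑ k, ∑ i, ∑ j, A i j k * Real.log (B i k))
          - (∑ k, ∑ i, ∑ j, A i j k * Real.log (D j k)) := by
      rw [hSdef]
      simp only [hterm]
      simp only [Finset.sum_add_distrib, Finset.sum_sub_distrib]
    rw [expand, q1, q2, q3, q4]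
    linarith [hcmi]
  -- per-k Gibbs data
  have husum : ∀ k, ∑ v : I × J, B v.1 k * D v.2 k / C k = ∑ v : I × J, A v.1 v.2 k := by
    intro k
    have e1 : ∑ v : I × J, B v.1 k * D v.2 k / C k = C k * C k / C k := by
      rw [Fintype.sum_prod_type]
      calc ∑ i, ∑ j, B i k * D j k / C k
          = ∑ i, (B i k / C k) * ∑ j, D j k := by
            refine Finset.sum_congr rfl fun i _ => ?_
            rw [Finset.mul_sum]
            exact Finset.sum_congr rfl fun j _ => by ring
        _ = (∑ i, B i k) / C k * ∑ j, D j k := by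
            rw [← Finset.sum_mul, Finset.sum_div]
        _ = C k / C k * C k := by
            rw [show (∑ i, B i k) = C k from rfl, show (∑ j, D j k) = C k from
              (Finset.sum_comm).symm]
        _ = C k * C k / C k := by ring
    have e2 : ∑ v : I × J, A v.1 v.2 k = C k := by
      rw [Fintype.sum_prod_type]
    rw [e1, e2]
    rcases eq_or_ne (C k) 0 with hc | hc
    · rw [hc]; simp
    · field_simp
  have habs : ∀ k (v : I × J), B v.1 k * D v.2 k / C k = 0 → A v.1 v.2 k = 0 := by
    intro k v hu
    rcases eq_or_ne (C k) 0 with hc | hc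
    · have := hBC v.1 k
      have := hAB v.1 v.2 k
      have := hB0 v.1 k
      have := hA0 v.1 v.2 k
      linarith [hc ▸ hBC v.1 k]
    · have hbd : B v.1 k * D v.2 k = 0 := by
        rcases div_eq_zero_iff.mp hu with h' | h'
        · exact h'
        · exact absurd h' hc
      rcases mul_eq_zero.mp hbd with h' | h'
      · linarith [hAB v.1 v.2 k, hA0 v.1 v.2 k]
      · linarith [hAD v.1 v.2 k, hA0 v.1 v.2 k]
  have hS0 : ∀ k, 0 ≤ S k := by
    intro k
    have := gibbs_sum (fun v : I × J => A v.1 v.2 k)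
      (fun v : I × J => B v.1 k * D v.2 k / C k)
      (fun v => hA0 v.1 v.2 k)
      (fun v => div_nonneg (mul_nonneg (hB0 v.1 k) (hD0 v.2 k)) (hC0 k))
      (habs k) (le_of_eq (husum k))
    rw [hSdef]
    calc (0:ℝ) ≤ ∑ v : I × J, A v.1 v.2 k
        * (Real.log (A v.1 v.2 k) - Real.log (B v.1 k * D v.2 k / C k)) := this
      _ = ∑ i, ∑ j, A i j k * (Real.log (A i j k) - Real.log (B i k * D j k / C k)) := by
          rw [Fintype.sum_prod_type]
  have hSk : ∀ k, S k = 0 := by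
    intro k
    have := (Finset.sum_eq_zero_iff_of_nonneg (fun k _ => hS0 k)).mp hSsum
    exact this k (Finset.mem_univ k)
  have key : ∀ i j k, A i j k * C k = B i k * D j k := by
    intro i j k
    have hgk := gibbs_eq (fun v : I × J => A v.1 v.2 k)
      (fun v : I × J => B v.1 k * D v.2 k / C k)
      (fun v => hA0 v.1 v.2 k)
      (fun v => div_nonneg (mul_nonneg (hB0 v.1 k) (hD0 v.2 k)) (hC0 k))
      (habs k) (husum k) ?_ (i, j)
    · rcases eq_or_ne (C k) 0 with hc | hc
      · have hBz : B i k = 0 := le_antisymm (hc ▸ hBC i k) (hB0 i k)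
        rw [hc, hBz]; ring
      · rw [hgk]
        field_simp
    · rw [show ∑ v : I × J, A v.1 v.2 k
          * (Real.log (A v.1 v.2 k) - Real.log (B v.1 k * D v.2 k / C k))
          = S k from by rw [hSdef, Fintype.sum_prod_type]]
      exact hSk k
  intro i j k
  rw [hCp, hBp, hDp]
  exact key i j k

lemma prob_comp_fiber {Ω α β : Type*} [Fintype Ω] [Fintype α] (p : Ω → ℝ) (U : Ω → α)
    (g : α → β) (c : β) :
    prob p (fun ω => g (U ω)) c = ∑ a ∈ univ.filter (fun a => g a = c), prob p U a := by
  rw [← prob_comp, prob_eq_sum_filter]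

theorem stmt2 {Ω 𝒳 𝒴 𝒬 γ : Type*} [Fintype Ω] [Fintype 𝒳] [Fintype 𝒴] [Fintype 𝒬]
    [Fintype γ]
    (p : Ω → ℝ) (hp : IsPMF p) (X : Ω → 𝒳) (Y : Ω → 𝒴) (Q : Ω → 𝒬)
    (f : 𝒳 ⊕ 𝒴 → γ)
    (hf : ∀ a b, f a = f b ↔
      Relation.EqvGen (edge (fun ab => prob p (fun ω => (X ω, Y ω)) ab)) a b)
    (h1 : cmi p Q Y X = 0) (h2 : cmi p Q X Y = 0) :
    mi p (fun ω => (X ω, Y ω)) Q = mi p (fun ω => f (Sum.inl (X ω))) Q ∧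
    mi p (fun ω => f (Sum.inl (X ω))) Q ≤ ent p (fun ω => f (Sum.inl (X ω))) := by
  obtain ⟨hp0, hp1⟩ := hp
  set J : 𝒳 → 𝒴 → 𝒬 → ℝ :=
    fun x y q => prob p (fun ω => (X ω, Y ω, Q ω)) (x, y, q) with hJ
  set μ2 : 𝒳 → 𝒴 → ℝ := fun x y => prob p (fun ω => (X ω, Y ω)) (x, y) with hμ2
  set mx : 𝒳 → ℝ := fun x => prob p X x with hmx
  set my : 𝒴 → ℝ := fun y => prob p Y y with hmy
  set qx : 𝒬 → 𝒳 → ℝ := fun q x => prob p (fun ω => (Q ω, X ω)) (q, x) with hqx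
  set qy : 𝒬 → 𝒴 → ℝ := fun q y => prob p (fun ω => (Q ω, Y ω)) (q, y) with hqy
  -- nonnegativity
  have hJ0 : ∀ x y q, 0 ≤ J x y q := fun x y q => prob_nonneg hp0 _ _
  have hμ0 : ∀ x y, 0 ≤ μ2 x y := fun x y => prob_nonneg hp0 _ _
  have hmx0 : ∀ x, 0 ≤ mx x := fun x => prob_nonneg hp0 _ _
  have hmy0 : ∀ y, 0 ≤ my y := fun y => prob_nonneg hp0 _ _
  have hqx0 : ∀ q x, 0 ≤ qx q x := fun q x => prob_nonneg hp0 _ _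
  have hqy0 : ∀ q y, 0 ≤ qy q y := fun q y => prob_nonneg hp0 _ _
  -- identifications
  have idJ : ∀ x y q, prob p (fun ω => (Q ω, Y ω, X ω)) (q, y, x) = J x y q := by
    intro x y q
    have hg : Function.Injective (fun v : 𝒳 × 𝒴 × 𝒬 => (v.2.2, v.2.1, v.1)) := by
      intro a b hab; simp only [Prod.ext_iff] at hab ⊢; tauto
    exact prob_relabel p (fun ω => (X ω, Y ω, Q ω)) hg (x, y, q)
  have idJ2 : ∀ x y q, prob p (fun ω => (Q ω, X ω, Y ω)) (q, x, y) = J x y q := by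
    intro x y q
    have hg : Function.Injective (fun v : 𝒳 × 𝒴 × 𝒬 => (v.2.2, v.1, v.2.1)) := by
      intro a b hab; simp only [Prod.ext_iff] at hab ⊢; tauto
    exact prob_relabel p (fun ω => (X ω, Y ω, Q ω)) hg (x, y, q)
  have idYX : ∀ x y, prob p (fun ω => (Y ω, X ω)) (y, x) = μ2 x y := by
    intro x y
    have hg : Function.Injective (fun v : 𝒳 × 𝒴 => (v.2, v.1)) := by
      intro a b hab; simp only [Prod.ext_iff] at hab ⊢; tauto
    exact prob_relabel p (fun ω => (X ω, Y ω)) hg (x, y)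
  have idXQ : ∀ x q, prob p (fun ω => (X ω, Q ω)) (x, q) = qx q x := by
    intro x q
    have hg : Function.Injective (fun v : 𝒬 × 𝒳 => (v.2, v.1)) := by
      intro a b hab; simp only [Prod.ext_iff] at hab ⊢; tauto
    exact prob_relabel p (fun ω => (Q ω, X ω)) hg (q, x)
  have idYQ : ∀ y q, prob p (fun ω => (Y ω, Q ω)) (y, q) = qy q y := by
    intro y q
    have hg : Function.Injective (fun v : 𝒬 × 𝒴 => (v.2, v.1)) := by
      intro a b hab; simp only [Prod.ext_iff] at hab ⊢; tauto
    exact prob_relabel p (fun ω => (Q ω, Y ω)) hg (q, y)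
  have e_mu : ∀ x y, μ2 x y = ∑ q, J x y q := by
    intro x y
    rw [hμ2]
    show prob p (fun ω => (X ω, Y ω)) (x, y) = _
    rw [prob_marg2 p (fun ω => (X ω, Y ω)) Q (x, y)]
    refine Finset.sum_congr rfl fun q _ => ?_
    have hg : Function.Injective (fun v : 𝒳 × 𝒴 × 𝒬 => ((v.1, v.2.1), v.2.2)) := by
      intro a b hab; simp only [Prod.ext_iff] at hab ⊢; tauto
    exact prob_relabel p (fun ω => (X ω, Y ω, Q ω)) hg (x, y, q)
  have e_mx : ∀ x, mx x = ∑ y, μ2 x y := fun x => prob_marg2 p X Y x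
  have e_my : ∀ y, my y = ∑ x, μ2 x y := by
    intro y
    show prob p Y y = _
    rw [prob_marg2 p Y X y]
    exact Finset.sum_congr rfl fun x _ => idYX x y
  have e_qx : ∀ q x, qx q x = ∑ y, J x y q := by
    intro q x
    rw [hqx]
    show prob p (fun ω => (Q ω, X ω)) (q, x) = _
    rw [prob_marg2 p (fun ω => (Q ω, X ω)) Y (q, x)]
    refine Finset.sum_congr rfl fun y _ => ?_
    have hg : Function.Injective (fun v : 𝒳 × 𝒴 × 𝒬 => ((v.2.2, v.1), v.2.1)) := by
      intro a b hab; simp only [Prod.ext_iff] at hab ⊢; tauto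
    exact prob_relabel p (fun ω => (X ω, Y ω, Q ω)) hg (x, y, q)
  have e_qy : ∀ q y, qy q y = ∑ x, J x y q := by
    intro q y
    rw [hqy]
    show prob p (fun ω => (Q ω, Y ω)) (q, y) = _
    rw [prob_marg2 p (fun ω => (Q ω, Y ω)) X (q, y)]
    refine Finset.sum_congr rfl fun x _ => ?_
    have hg : Function.Injective (fun v : 𝒳 × 𝒴 × 𝒬 => ((v.2.2, v.2.1), v.1)) := by
      intro a b hab; simp only [Prod.ext_iff] at hab ⊢; tauto
    exact prob_relabel p (fun ω => (X ω, Y ω, Q ω)) hg (x, y, q)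
  have e_mx_q : ∀ x, mx x = ∑ q, qx q x := by
    intro x
    show prob p X x = _
    rw [prob_marg2 p X Q x]
    exact Finset.sum_congr rfl fun q _ => idXQ x q
  -- conditional independences
  have CI1 : ∀ x y q, J x y q * mx x = qx q x * μ2 x y := by
    intro x y q
    have := cmi_zero_indep p hp0 Q Y X h1 q y x
    rw [idJ x y q, idYX x y] at this
    exact this
  have CI2 : ∀ x y q, J x y q * my y = qy q y * μ2 x y := by
    intro x y q
    have := cmi_zero_indep p hp0 Q X Y h2 q x y
    rw [idJ2 x y q] at this
    exact this
  -- ratio function on nodes of the bipartite graph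
  set ρ : 𝒳 ⊕ 𝒴 → 𝒬 → ℝ :=
    Sum.elim (fun x q => qx q x / mx x) (fun y q => qy q y / my y) with hρ
  have cross : ∀ x y, 0 < μ2 x y →
      ρ (Sum.inl x) = ρ (Sum.inr y) ∧ 0 < mx x ∧ 0 < my y := by
    intro x y h
    have hmxp : 0 < mx x := by
      rw [e_mx x]
      exact lt_of_lt_of_le h (Finset.single_le_sum (fun y' _ => hμ0 x y') (Finset.mem_univ y))
    have hmyp : 0 < my y := by
      rw [e_my y]
      exact lt_of_lt_of_le h
        (Finset.single_le_sum (f := fun x' => μ2 x' y) (fun x' _ => hμ0 x' y)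
          (Finset.mem_univ x))
    refine ⟨funext fun q => ?_, hmxp, hmyp⟩
    show qx q x / mx x = qy q y / my y
    rw [div_eq_div_iff hmxp.ne' hmyp.ne']
    have hcc : μ2 x y * (qx q x * my y) = μ2 x y * (qy q y * mx x) := by
      linear_combination mx x * (CI2 x y q) - my y * (CI1 x y q)
    exact mul_left_cancel₀ h.ne' hcc
  have edge_lemma : ∀ a b, edge (fun ab => prob p (fun ω => (X ω, Y ω)) ab) a b →
      ρ a = ρ b := by
    intro a b hab
    cases a with
    | inl x =>
      cases b with
      | inl x' => exact hab.elim
      | inr y => exact (cross x y hab).1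
    | inr y =>
      cases b with
      | inl x => exact ((cross x y hab).1).symm
      | inr y' => exact hab.elim
  have eqv_lemma : ∀ a b,
      Relation.EqvGen (edge (fun ab => prob p (fun ω => (X ω, Y ω)) ab)) a b →
      a = b ∨ ρ a = ρ b := by
    intro a b hab
    induction hab with
    | rel a b h => exact Or.inr (edge_lemma a b h)
    | refl a => exact Or.inl rfl
    | symm a b h ih =>
      rcases ih with h' | h'
      · exact Or.inl h'.symm
      · exact Or.inr h'.symm
    | trans a b c h1' h2' ih1 ih2 =>
      rcases ih1 with h' | h' <;> rcases ih2 with h'' | h''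
      · exact Or.inl (h'.trans h'')
      · exact Or.inr (h' ▸ h'')
      · exact Or.inr (h'' ▸ h')
      · exact Or.inr (h'.trans h'')
  have rho_const : ∀ x x', f (Sum.inl x) = f (Sum.inl x') →
      ρ (Sum.inl x) = ρ (Sum.inl x') := by
    intro x x' h
    rcases eqv_lemma _ _ ((hf _ _).mp h) with h' | h'
    · rw [h']
    · exact h'
  -- class quantities
  set cls : γ → Finset 𝒳 := fun c => univ.filter (fun x => f (Sum.inl x) = c) with hcls
  set Kq : γ → 𝒬 → ℝ := fun c q => ∑ x ∈ cls c, qx q x with hKq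
  set Kc : γ → ℝ := fun c => ∑ x ∈ cls c, mx x with hKc
  set R : γ → 𝒬 → ℝ := fun c q => Kq c q / Kc c with hR
  have hKq0 : ∀ c q, 0 ≤ Kq c q := fun c q => Finset.sum_nonneg fun x _ => hqx0 q x
  have hKc0 : ∀ c, 0 ≤ Kc c := fun c => Finset.sum_nonneg fun x _ => hmx0 x
  have hqx_le_mx : ∀ q x, qx q x ≤ mx x := by
    intro q x
    rw [e_mx_q x]
    exact Finset.single_le_sum (fun q' _ => hqx0 q' x) (Finset.mem_univ q)
  have claim0 : ∀ x q, qx q x = mx x * ρ (Sum.inl x) q := by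
    intro x q
    show qx q x = mx x * (qx q x / mx x)
    rcases eq_or_ne (mx x) 0 with h | h
    · have h0 : qx q x = 0 := le_antisymm (h ▸ hqx_le_mx q x) (hqx0 q x)
      rw [h0, h]; ring
    · field_simp
  have claim2 : ∀ x q, Kq (f (Sum.inl x)) q = Kc (f (Sum.inl x)) * ρ (Sum.inl x) q := by
    intro x q
    show (∑ x' ∈ cls (f (Sum.inl x)), qx q x')
        = (∑ x' ∈ cls (f (Sum.inl x)), mx x') * ρ (Sum.inl x) q
    rw [Finset.sum_mul]
    refine Finset.sum_congr rfl fun x' hx' => ?_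
    have hfx : f (Sum.inl x') = f (Sum.inl x) := (Finset.mem_filter.mp hx').2
    rw [claim0 x' q, rho_const x' x hfx]
  have hKc_pos : ∀ x, 0 < mx x → 0 < Kc (f (Sum.inl x)) := by
    intro x hx
    have hmem : x ∈ cls (f (Sum.inl x)) := Finset.mem_filter.mpr ⟨Finset.mem_univ x, rfl⟩
    exact lt_of_lt_of_le hx (Finset.single_le_sum (fun x' _ => hmx0 x') hmem)
  have claim3 : ∀ x q, 0 < mx x → R (f (Sum.inl x)) q = ρ (Sum.inl x) q := by
    intro x q hx
    show Kq (f (Sum.inl x)) q / Kc (f (Sum.inl x)) = ρ (Sum.inl x) q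
    rw [claim2 x q, mul_comm, mul_div_assoc, div_self (hKc_pos x hx).ne', mul_one]
  have hJ_le_mu : ∀ x y q, J x y q ≤ μ2 x y := by
    intro x y q
    rw [e_mu x y]
    exact Finset.single_le_sum (fun q' _ => hJ0 x y q') (Finset.mem_univ q)
  have hmx_pos_of_mu : ∀ x y, 0 < μ2 x y → 0 < mx x := by
    intro x y h
    rw [e_mx x]
    exact lt_of_lt_of_le h (Finset.single_le_sum (fun y' _ => hμ0 x y') (Finset.mem_univ y))
  have Key1 : ∀ x y q, J x y q = μ2 x y * R (f (Sum.inl x)) q := by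
    intro x y q
    rcases (hμ0 x y).eq_or_lt with h | h
    · have h0 : J x y q = 0 := le_antisymm (h ▸ hJ_le_mu x y q) (hJ0 x y q)
      rw [h0, ← h]; ring
    · have hmxp : 0 < mx x := hmx_pos_of_mu x y h
      apply mul_left_cancel₀ hmxp.ne'
      calc mx x * J x y q = J x y q * mx x := by ring
        _ = qx q x * μ2 x y := CI1 x y q
        _ = (mx x * ρ (Sum.inl x) q) * μ2 x y := by rw [← claim0]
        _ = mx x * (μ2 x y * R (f (Sum.inl x)) q) := by rw [claim3 x q hmxp]; ring
  have Key2 : ∀ c q, Kq c q = Kc c * R c q := by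
    intro c q
    rcases eq_or_ne (Kc c) 0 with h | h
    · have h0 : Kq c q = 0 := by
        refine le_antisymm ?_ (hKq0 c q)
        calc Kq c q ≤ Kc c := Finset.sum_le_sum fun x' _ => hqx_le_mx q x'
          _ = 0 := h
      rw [h0, h, zero_mul]
    · show Kq c q = Kc c * (Kq c q / Kc c)
      field_simp
  have sumKq : ∀ c, ∑ q, Kq c q = Kc c := by
    intro c
    show ∑ q, ∑ x' ∈ cls c, qx q x' = ∑ x' ∈ cls c, mx x'
    rw [Finset.sum_comm]
    exact Finset.sum_congr rfl fun x' _ => (e_mx_q x').symm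
  have sumR : ∀ c, Kc c ≠ 0 → ∑ q, R c q = 1 := by
    intro c h
    show ∑ q, Kq c q / Kc c = 1
    rw [← Finset.sum_div, sumKq, div_self h]
  -- identification of Q' distributions
  have idQ' : ∀ c, prob p (fun ω => f (Sum.inl (X ω))) c = Kc c := by
    intro c
    have := prob_comp_fiber p X (fun x => f (Sum.inl x)) c
    exact this
  have idQ'Q : ∀ c q, prob p (fun ω => (f (Sum.inl (X ω)), Q ω)) (c, q) = Kq c q := by
    intro c q
    have h0 := prob_comp_fiber p (fun ω => (X ω, Q ω))
      (fun v : 𝒳 × 𝒬 => (f (Sum.inl v.1), v.2)) (c, q)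
    rw [show prob p (fun ω => (f (Sum.inl (X ω)), Q ω)) (c, q)
        = prob p (fun ω => ((fun v : 𝒳 × 𝒬 => (f (Sum.inl v.1), v.2)) ((X ω, Q ω)))) (c, q)
        from rfl, h0]
    rw [Finset.sum_filter, Fintype.sum_prod_type]
    have hrhs : Kq c q = ∑ x, (if f (Sum.inl x) = c then qx q x else 0) := by
      rw [hKq, hcls]
      exact Finset.sum_filter _ _
    rw [hrhs]
    refine Finset.sum_congr rfl fun x _ => ?_
    simp only [Prod.mk.injEq]
    rcases eq_or_ne (f (Sum.inl x)) c with h | h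
    · rw [if_pos h, ← idXQ x q]
      rw [Finset.sum_eq_single q]
      · simp [h]
      · intro q' _ hq'
        exact if_neg (by simp [hq', h])
      · simp
    · rw [if_neg h]
      exact Finset.sum_eq_zero fun q' _ => if_neg (by simp [h])
  have idQ : ∀ q, prob p Q q = ∑ c, Kq c q := by
    intro q
    rw [prob_marg2 p Q (fun ω => f (Sum.inl (X ω))) q]
    refine Finset.sum_congr rfl fun c _ => ?_
    rw [← idQ'Q c q]
    have hg : Function.Injective (fun v : γ × 𝒬 => (v.2, v.1)) := by
      intro a b hab; simp only [Prod.ext_iff] at hab ⊢; tauto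
    exact prob_relabel p (fun ω => (f (Sum.inl (X ω)), Q ω)) hg (c, q)
  -- entropy expressions
  have entXY : ent p (fun ω => (X ω, Y ω)) = ∑ x, ∑ y, Real.negMulLog (μ2 x y) := by
    rw [ent, Fintype.sum_prod_type]
  have entXYQ : ent p (fun ω => ((X ω, Y ω), Q ω))
      = ∑ x, ∑ y, ∑ q, Real.negMulLog (J x y q) := by
    have hg : Function.Injective (fun v : 𝒳 × 𝒴 × 𝒬 => ((v.1, v.2.1), v.2.2)) := by
      intro a b hab; simp only [Prod.ext_iff] at hab ⊢; tauto
    have e := ent_relabel p (fun ω => (X ω, Y ω, Q ω)) hg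
    rw [show ent p (fun ω => ((X ω, Y ω), Q ω)) = ent p (fun ω => (X ω, Y ω, Q ω)) from e]
    rw [ent, Fintype.sum_prod_type]
    exact Finset.sum_congr rfl fun x _ => by rw [Fintype.sum_prod_type]
  have entQ'Q : ent p (fun ω => (f (Sum.inl (X ω)), Q ω))
      = ∑ c, ∑ q, Real.negMulLog (Kq c q) := by
    rw [ent, Fintype.sum_prod_type]
    exact Finset.sum_congr rfl fun c _ => Finset.sum_congr rfl fun q _ => by rw [idQ'Q]
  have entQ' : ent p (fun ω => f (Sum.inl (X ω))) = ∑ c, Real.negMulLog (Kc c) := by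
    rw [ent]
    exact Finset.sum_congr rfl fun c _ => by rw [idQ']
  have entQ : ent p Q = ∑ q, Real.negMulLog (∑ c, Kq c q) := by
    rw [ent]
    exact Finset.sum_congr rfl fun q _ => by rw [idQ]
  -- main algebraic identities
  set G : γ → ℝ := fun c => ∑ q, Real.negMulLog (R c q) with hG
  have inner1 : ∀ x y, ∑ q, Real.negMulLog (μ2 x y * R (f (Sum.inl x)) q)
      = Real.negMulLog (μ2 x y) + μ2 x y * G (f (Sum.inl x)) := by
    intro x y
    rcases (hμ0 x y).eq_or_lt with h | h
    · rw [← h]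
      simp [Real.negMulLog_zero]
    · have hsum1 : ∑ q, R (f (Sum.inl x)) q = 1 :=
        sumR _ (hKc_pos x (hmx_pos_of_mu x y h)).ne'
      calc ∑ q, Real.negMulLog (μ2 x y * R (f (Sum.inl x)) q)
          = ∑ q, (R (f (Sum.inl x)) q * Real.negMulLog (μ2 x y)
              + μ2 x y * Real.negMulLog (R (f (Sum.inl x)) q)) :=
            Finset.sum_congr rfl fun q _ => Real.negMulLog_mul _ _
        _ = (∑ q, R (f (Sum.inl x)) q) * Real.negMulLog (μ2 x y)
              + μ2 x y * ∑ q, Real.negMulLog (R (f (Sum.inl x)) q) := by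
            rw [Finset.sum_add_distrib, ← Finset.sum_mul, ← Finset.mul_sum]
        _ = Real.negMulLog (μ2 x y) + μ2 x y * G (f (Sum.inl x)) := by
            rw [hsum1, one_mul]
  have diff1 : ∑ x, ∑ y, ∑ q, Real.negMulLog (J x y q)
      = (∑ x, ∑ y, Real.negMulLog (μ2 x y)) + ∑ c, Kc c * G c := by
    have step1 : ∑ x, ∑ y, ∑ q, Real.negMulLog (J x y q)
        = ∑ x, ∑ y, (Real.negMulLog (μ2 x y) + μ2 x y * G (f (Sum.inl x))) := by
      refine Finset.sum_congr rfl fun x _ => Finset.sum_congr rfl fun y _ => ?_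
      rw [← inner1 x y]
      exact Finset.sum_congr rfl fun q _ => by rw [Key1]
    rw [step1]
    have step2 : ∑ x, ∑ y, (Real.negMulLog (μ2 x y) + μ2 x y * G (f (Sum.inl x)))
        = (∑ x, ∑ y, Real.negMulLog (μ2 x y)) + ∑ x, mx x * G (f (Sum.inl x)) := by
      simp only [Finset.sum_add_distrib]
      congr 1
      refine Finset.sum_congr rfl fun x _ => ?_
      rw [← Finset.sum_mul, ← e_mx]
    rw [step2]
    congr 1
    rw [← Finset.sum_fiberwise univ (fun x => f (Sum.inl x)) (fun x => mx x * G (f (Sum.inl x)))]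
    refine Finset.sum_congr rfl fun c _ => ?_
    rw [hKc, Finset.sum_mul]
    refine Finset.sum_congr rfl fun x hx => ?_
    rw [(Finset.mem_filter.mp hx).2]
  have diff2 : ∑ c, ∑ q, Real.negMulLog (Kq c q)
      = (∑ c, Real.negMulLog (Kc c)) + ∑ c, Kc c * G c := by
    rw [← Finset.sum_add_distrib]
    refine Finset.sum_congr rfl fun c _ => ?_
    rcases eq_or_ne (Kc c) 0 with h | h
    · have : ∀ q, Kq c q = 0 := fun q => by rw [Key2, h, zero_mul]
      simp [this, h, Real.negMulLog_zero]
    · calc ∑ q, Real.negMulLog (Kq c q)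
          = ∑ q, (R c q * Real.negMulLog (Kc c) + Kc c * Real.negMulLog (R c q)) :=
            Finset.sum_congr rfl fun q _ => by rw [Key2 c q]; exact Real.negMulLog_mul _ _
        _ = (∑ q, R c q) * Real.negMulLog (Kc c) + Kc c * ∑ q, Real.negMulLog (R c q) := by
            rw [Finset.sum_add_distrib, ← Finset.sum_mul, ← Finset.mul_sum]
        _ = Real.negMulLog (Kc c) + Kc c * G c := by rw [sumR c h, one_mul, hG]
  constructor
  · simp only [mi]
    rw [entXYQ, entXY, entQ'Q, entQ']
    linarith [diff1, diff2]
  · simp only [mi]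
    rw [entQ'Q, entQ', entQ]
    have hle : ∑ q, Real.negMulLog (∑ c, Kq c q)
        ≤ ∑ c, ∑ q, Real.negMulLog (Kq c q) := by
      rw [Finset.sum_comm]
      exact Finset.sum_le_sum fun q _ =>
        negMulLog_sum_le univ (fun c => Kq c q) (fun c _ => hKq0 c q)
    linarith
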